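/- Let S ⊂ L(X) be a set of monic elements such that every composition of right multiplication in S is trivial modulo S. Then every s-word u|_s (s ∈ S) can be written as a linear combination Σ α_i u_i|_{s_i} of normal s_i-words with s_i ∈ S and u_i|_{s̄_i} ≤ the leading word of u|_s. -/

import Mathlib

/-- Ω-words for Ω = {≺, ≻}: `p u v` denotes u ≺ v and `s u v` denotes u ≻ v. -/
inductive LW (X : Type) : Type
  | var : X → LW X
  | p : LW X → LW X → LW X
  | s : LW X → LW X → LW X
deriving DecidableEq

namespace LW

variable {X : Type}

/-- number of occurrences of variables, |u|_X -/
def szX : LW X → ℕ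
  | var _ => 1
  | p u v => szX u + szX v
  | s u v => szX u + szX v

/-- The weight-lexicographic ordering on Ω-words: wt(x) = (1,x),
wt(δᵢ(u₁,u₂)) = (|u|_X, δᵢ, u₁, u₂) with ≻ < ≺, compared lexicographically. -/
inductive LLt [LinearOrder X] : LW X → LW X → Prop
  | size {u v : LW X} : szX u < szX v → LLt u v
  | var {x y : X} : x < y → LLt (var x) (var y)
  | sp {u1 u2 v1 v2 : LW X} : szX (s u1 u2) = szX (p v1 v2) → LLt (s u1 u2) (p v1 v2)
  | s1 {u1 u2 v1 v2 : LW X} : szX (s u1 u2) = szX (s v1 v2) → LLt u1 v1 →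
      LLt (s u1 u2) (s v1 v2)
  | s2 {u1 u2 v2 : LW X} : szX (s u1 u2) = szX (s u1 v2) → LLt u2 v2 →
      LLt (s u1 u2) (s u1 v2)
  | p1 {u1 u2 v1 v2 : LW X} : szX (p u1 u2) = szX (p v1 v2) → LLt u1 v1 →
      LLt (p u1 u2) (p v1 v2)
  | p2 {u1 u2 v2 : LW X} : szX (p u1 u2) = szX (p u1 v2) → LLt u2 v2 →
      LLt (p u1 u2) (p u1 v2)

/-- Normal words: x ∈ X is normal; v ≻ w is normal if v, w are; v ≺ w is normal
if v, w are normal and v is not of the form v₁ ≻ v₂. -/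
inductive Normal : LW X → Prop
  | var {x : X} : Normal (var x)
  | suc {u v : LW X} : Normal u → Normal v → Normal (s u v)
  | pre {u v : LW X} : Normal u → Normal v → (∀ a b, u ≠ s a b) → Normal (p u v)

end LW

/-- A ⋆-Ω-word for Ω = {≺,≻}. -/
inductive LCtx (X : Type) : Type
  | hole : LCtx X
  | pL : LCtx X → LW X → LCtx X
  | pR : LW X → LCtx X → LCtx X
  | sL : LCtx X → LW X → LCtx X
  | sR : LW X → LCtx X → LCtx X

/-- Substitution of an Ω-word for ⋆ in a ⋆-Ω-word. -/
def LCtx.subst {X : Type} : LCtx X → LW X → LW X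
  | .hole, u => u
  | .pL c w, u => .p (c.subst u) w
  | .pR w c, u => .p w (c.subst u)
  | .sL c w, u => .s (c.subst u) w
  | .sR w c, u => .s w (c.subst u)
namespace LW

variable {X : Type}

/-- The product [u ≺ v] for normal u, v. -/
def nfP : LW X → LW X → LW X
  | .var x, v => .p (.var x) v
  | .p a b, v => .p (.p a b) v
  | .s a b, v => .s a (nfP b v)

/-- The normal form of an Ω-word modulo (x≻y)≺z = x≻(y≺z). -/
def nf : LW X → LW X
  | .var x => .var x
  | .p u v => nfP (nf u) (nf v)
  | .s u v => .s (nf u) (nf v)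

theorem normal_nfP {u v : LW X} (hu : Normal u) (hv : Normal v) : Normal (nfP u v) := by
  induction u with
  | var x => exact Normal.pre hu hv (fun a b h => by cases h)
  | p a b iha ihb => exact Normal.pre hu hv (fun a b h => by cases h)
  | s a b iha ihb =>
      cases hu with
      | suc ha hb => exact Normal.suc ha (ihb hb)

theorem normal_nf : ∀ u : LW X, Normal (nf u)
  | .var _ => Normal.var
  | .p u v => normal_nfP (normal_nf u) (normal_nf v)
  | .s u v => Normal.suc (normal_nf u) (normal_nf v)

end LW

/-- The set N of normal words. -/
abbrev NW (X : Type) := {w : LW X // LW.Normal w}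

/-- Normal form as a map into N. -/
def nfN {X : Type} (w : LW X) : NW X := ⟨LW.nf w, LW.normal_nf w⟩
section AuxOrder
set_option linter.unusedSectionVars false

namespace LW

variable {X : Type} [LinearOrder X]

theorem szX_pos : ∀ u : LW X, 1 ≤ szX u
  | var _ => le_refl _
  | p u v => by have := szX_pos u; simp only [szX]; omega
  | s u v => by have := szX_pos u; simp only [szX]; omega

theorem llt_szX_le {u v : LW X} (h : LLt u v) : szX u ≤ szX v := by
  cases h with
  | size h => exact h.le
  | var _ => exact le_refl _
  | sp h => exact h.le
  | s1 h _ => exact h.le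
  | s2 h _ => exact h.le
  | p1 h _ => exact h.le
  | p2 h _ => exact h.le

theorem llt_sL {a b t : LW X} (h : LLt a b) : LLt (s a t) (s b t) := by
  rcases lt_or_eq_of_le (llt_szX_le h) with h' | h'
  · exact .size (by simp only [szX]; omega)
  · exact .s1 (by simp only [szX]; omega) h

theorem llt_sR {a b t : LW X} (h : LLt a b) : LLt (s t a) (s t b) := by
  rcases lt_or_eq_of_le (llt_szX_le h) with h' | h'
  · exact .size (by simp only [szX]; omega)
  · exact .s2 (by simp only [szX]; omega) h

theorem llt_pL {a b t : LW X} (h : LLt a b) : LLt (p a t) (p b t) := by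
  rcases lt_or_eq_of_le (llt_szX_le h) with h' | h'
  · exact .size (by simp only [szX]; omega)
  · exact .p1 (by simp only [szX]; omega) h

theorem llt_pR {a b t : LW X} (h : LLt a b) : LLt (p t a) (p t b) := by
  rcases lt_or_eq_of_le (llt_szX_le h) with h' | h'
  · exact .size (by simp only [szX]; omega)
  · exact .p2 (by simp only [szX]; omega) h

theorem llt_trans : ∀ {a b c : LW X}, LLt a b → LLt b c → LLt a c := by
  intro a b c h1 h2
  induction a generalizing b c with
  | var x =>
    by_cases hs : szX (var x : LW X) < szX c
    · exact .size hs
    · have e1 := llt_szX_le h1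
      have e2 := llt_szX_le h2
      cases h1 with
      | size h => omega
      | var hxy =>
        cases h2 with
        | size h => omega
        | var hyz => exact .var (hxy.trans hyz)
  | s a1 a2 ih1 ih2 =>
    by_cases hs : szX (s a1 a2) < szX c
    · exact .size hs
    · have e1 := llt_szX_le h1
      have e2 := llt_szX_le h2
      cases h1 with
      | size h => omega
      | sp hb =>
        cases h2 with
        | size h => omega
        | p1 hb2 h => exact .sp (by omega)
        | p2 hb2 h => exact .sp (by omega)
      | s1 hb h =>
        cases h2 with
        | size h => omega
        | sp hb2 => exact .sp (by omega)
        | s1 hb2 h' => exact .s1 (by omega) (ih1 h h')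
        | s2 hb2 h' => exact .s1 (by omega) h
      | s2 hb h =>
        cases h2 with
        | size h' => omega
        | sp hb2 => exact .sp (by omega)
        | s1 hb2 h' => exact .s1 (by omega) h'
        | s2 hb2 h' => exact .s2 (by omega) (ih2 h h')
  | p a1 a2 ih1 ih2 =>
    by_cases hs : szX (p a1 a2) < szX c
    · exact .size hs
    · have e1 := llt_szX_le h1
      have e2 := llt_szX_le h2
      cases h1 with
      | size h => omega
      | p1 hb h =>
        cases h2 with
        | size h' => omega
        | p1 hb2 h' => exact .p1 (by omega) (ih1 h h')
        | p2 hb2 h' => exact .p1 (by omega) h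
      | p2 hb h =>
        cases h2 with
        | size h' => omega
        | p1 hb2 h' => exact .p1 (by omega) h'
        | p2 hb2 h' => exact .p2 (by omega) (ih2 h h')

theorem llt_irrefl : ∀ a : LW X, ¬ LLt a a := by
  intro a
  induction a with
  | var x =>
    intro h
    cases h with
    | size h => omega
    | var h => exact absurd h (lt_irrefl _)
  | s a1 a2 ih1 ih2 =>
    intro h
    cases h with
    | size h => omega
    | s1 _ h => exact ih1 h
    | s2 _ h => exact ih2 h
  | p a1 a2 ih1 ih2 =>
    intro h
    cases h with
    | size h => omega
    | p1 _ h => exact ih1 h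
    | p2 _ h => exact ih2 h

theorem llt_total : ∀ (a b : LW X), LLt a b ∨ a = b ∨ LLt b a := by
  intro a b
  induction a generalizing b with
  | var x =>
    cases b with
    | var y =>
      rcases lt_trichotomy x y with h | h | h
      · exact .inl (.var h)
      · exact .inr (.inl (by rw [h]))
      · exact .inr (.inr (.var h))
    | p b1 b2 =>
      refine .inl (.size ?_)
      have := szX_pos b1; have := szX_pos b2; simp only [szX]; omega
    | s b1 b2 =>
      refine .inl (.size ?_)
      have := szX_pos b1; have := szX_pos b2; simp only [szX]; omega
  | s a1 a2 ih1 ih2 =>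
    cases b with
    | var y =>
      refine .inr (.inr (.size ?_))
      have := szX_pos a1; have := szX_pos a2; simp only [szX]; omega
    | p b1 b2 =>
      rcases Nat.lt_trichotomy (szX (s a1 a2)) (szX (p b1 b2)) with h | h | h
      · exact .inl (.size h)
      · exact .inl (.sp h)
      · exact .inr (.inr (.size h))
    | s b1 b2 =>
      rcases Nat.lt_trichotomy (szX (s a1 a2)) (szX (s b1 b2)) with h | h | h
      · exact .inl (.size h)
      · rcases ih1 b1 with h1 | h1 | h1
        · exact .inl (.s1 h h1)
        · subst h1
          rcases ih2 b2 with h2 | h2 | h2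
          · exact .inl (.s2 h h2)
          · exact .inr (.inl (by rw [h2]))
          · exact .inr (.inr (.s2 h.symm h2))
        · exact .inr (.inr (.s1 h.symm h1))
      · exact .inr (.inr (.size h))
  | p a1 a2 ih1 ih2 =>
    cases b with
    | var y =>
      refine .inr (.inr (.size ?_))
      have := szX_pos a1; have := szX_pos a2; simp only [szX]; omega
    | s b1 b2 =>
      rcases Nat.lt_trichotomy (szX (p a1 a2)) (szX (s b1 b2)) with h | h | h
      · exact .inl (.size h)
      · exact .inr (.inr (.sp h.symm))
      · exact .inr (.inr (.size h))
    | p b1 b2 =>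
      rcases Nat.lt_trichotomy (szX (p a1 a2)) (szX (p b1 b2)) with h | h | h
      · exact .inl (.size h)
      · rcases ih1 b1 with h1 | h1 | h1
        · exact .inl (.p1 h h1)
        · subst h1
          rcases ih2 b2 with h2 | h2 | h2
          · exact .inl (.p2 h h2)
          · exact .inr (.inl (by rw [h2]))
          · exact .inr (.inr (.p2 h.symm h2))
        · exact .inr (.inr (.p1 h.symm h1))
      · exact .inr (.inr (.size h))

theorem acc_var [WellFoundedLT X] (x : X) : Acc LLt (var x : LW X) := by
  refine WellFounded.induction (C := fun x : X => Acc LLt (var x : LW X)) (IsWellFounded.wf (r := ((· < ·) : X → X → Prop))) x ?_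
  intro x ih
  constructor
  intro b hb
  cases hb with
  | size h => have := szX_pos b; simp only [szX] at h; omega
  | var h => exact ih _ h

theorem acc_s (n : ℕ) (hn : ∀ b : LW X, szX b < n → Acc LLt b) :
    ∀ a1 : LW X, Acc LLt a1 → ∀ a2 : LW X, Acc LLt a2 → szX a1 + szX a2 = n →
      Acc LLt (s a1 a2) := by
  intro a1 h1
  induction h1 with
  | intro a1 _ ih1 =>
    intro a2 h2
    induction h2 with
    | intro a2 _ ih2 =>
      intro hsz
      constructor
      intro b hb
      cases hb with
      | size h =>
        refine hn b ?_
        simp only [szX] at h; omega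
      | s1 he h =>
        rename_i b1 b2
        have he' : szX b1 + szX b2 = szX a1 + szX a2 := by simpa only [szX] using he
        have hp := szX_pos b1
        exact ih1 b1 h b2 (hn b2 (by omega)) (by omega)
      | s2 he h =>
        rename_i b2
        have he' : szX a1 + szX b2 = szX a1 + szX a2 := by simpa only [szX] using he
        exact ih2 b2 h (by omega)

theorem acc_p (n : ℕ) (hn : ∀ b : LW X, szX b < n → Acc LLt b) :
    ∀ a1 : LW X, Acc LLt a1 → ∀ a2 : LW X, Acc LLt a2 → szX a1 + szX a2 = n →
      Acc LLt (p a1 a2) := by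
  intro a1 h1
  induction h1 with
  | intro a1 _ ih1 =>
    intro a2 h2
    induction h2 with
    | intro a2 _ ih2 =>
      intro hsz
      constructor
      intro b hb
      cases hb with
      | size h =>
        refine hn b ?_
        simp only [szX] at h; omega
      | sp he =>
        rename_i b1 b2
        have he' : szX b1 + szX b2 = szX a1 + szX a2 := by simpa only [szX] using he
        have hp1 := szX_pos b1
        have hp2 := szX_pos b2
        exact acc_s n hn b1 (hn b1 (by omega)) b2 (hn b2 (by omega)) (by omega)
      | p1 he h =>
        rename_i b1 b2
        have he' : szX b1 + szX b2 = szX a1 + szX a2 := by simpa only [szX] using he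
        have hp := szX_pos b1
        exact ih1 b1 h b2 (hn b2 (by omega)) (by omega)
      | p2 he h =>
        rename_i b2
        have he' : szX a1 + szX b2 = szX a1 + szX a2 := by simpa only [szX] using he
        exact ih2 b2 h (by omega)

theorem acc_of_size [WellFoundedLT X] : ∀ n, ∀ a : LW X, szX a < n → Acc LLt a := by
  intro n
  induction n with
  | zero => intro a h; omega
  | succ n ih =>
    intro a ha
    rcases Nat.lt_succ_iff_lt_or_eq.mp ha with h | h
    · exact ih a h
    · cases a with
      | var x => exact acc_var x
      | s a1 a2 =>
        have h' : szX a1 + szX a2 = n := by simpa only [szX] using h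
        have p1 := szX_pos a1
        have p2 := szX_pos a2
        exact acc_s n ih a1 (ih a1 (by omega)) a2 (ih a2 (by omega)) h'
      | p a1 a2 =>
        have h' : szX a1 + szX a2 = n := by simpa only [szX] using h
        have p1 := szX_pos a1
        have p2 := szX_pos a2
        exact acc_p n ih a1 (ih a1 (by omega)) a2 (ih a2 (by omega)) h'

theorem llt_wf [WellFoundedLT X] : WellFounded (LLt : LW X → LW X → Prop) :=
  ⟨fun a => acc_of_size (szX a + 1) a (Nat.lt_succ_self _)⟩

end LW

end AuxOrder

section AuxNf
set_option linter.unusedSectionVars false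

namespace LW

variable {X : Type} [LinearOrder X]

theorem szX_nfP : ∀ a b : LW X, szX (nfP a b) = szX a + szX b
  | var _, _ => rfl
  | p _ _, _ => rfl
  | s a1 a2, b => by simp only [nfP, szX, szX_nfP a2 b]; omega

theorem szX_nf : ∀ u : LW X, szX (nf u) = szX u
  | var _ => rfl
  | p u v => by simp only [nf, szX_nfP, szX, szX_nf u, szX_nf v]
  | s u v => by simp only [nf, szX, szX_nf u, szX_nf v]

theorem normal_s_inv {a b : LW X} (h : Normal (s a b)) : Normal a ∧ Normal b := by
  cases h with
  | suc h1 h2 => exact ⟨h1, h2⟩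

theorem normal_p_inv {a b : LW X} (h : Normal (p a b)) :
    Normal a ∧ Normal b ∧ ∀ x y, a ≠ s x y := by
  cases h with
  | pre h1 h2 h3 => exact ⟨h1, h2, h3⟩

theorem nfP_eq_p : ∀ {a : LW X} (b : LW X), (∀ x y, a ≠ s x y) → nfP a b = p a b
  | var _, _, _ => rfl
  | p _ _, _, _ => rfl
  | s a1 a2, _, h => absurd rfl (h a1 a2)

theorem nf_of_normal {u : LW X} (h : Normal u) : nf u = u := by
  induction u with
  | var x => rfl
  | s a b iha ihb =>
    obtain ⟨ha, hb⟩ := normal_s_inv h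
    simp only [nf, iha ha, ihb hb]
  | p a b iha ihb =>
    obtain ⟨ha, hb, hns⟩ := normal_p_inv h
    simp only [nf, iha ha, ihb hb]
    exact nfP_eq_p b hns

/-- non-strict order -/
def LLe (a b : LW X) : Prop := a = b ∨ LLt a b

theorem LLe.trans {a b c : LW X} (h1 : LLe a b) (h2 : LLe b c) : LLe a c := by
  rcases h1 with rfl | h1
  · exact h2
  · rcases h2 with rfl | h2
    · exact .inr h1
    · exact .inr (llt_trans h1 h2)

theorem lle_sL {a b t : LW X} (h : LLe a b) : LLe (s a t) (s b t) := by
  rcases h with rfl | h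
  · exact .inl rfl
  · exact .inr (llt_sL h)

theorem lle_sR {a b t : LW X} (h : LLe a b) : LLe (s t a) (s t b) := by
  rcases h with rfl | h
  · exact .inl rfl
  · exact .inr (llt_sR h)

theorem lle_pL {a b t : LW X} (h : LLe a b) : LLe (p a t) (p b t) := by
  rcases h with rfl | h
  · exact .inl rfl
  · exact .inr (llt_pL h)

theorem lle_pR {a b t : LW X} (h : LLe a b) : LLe (p t a) (p t b) := by
  rcases h with rfl | h
  · exact .inl rfl
  · exact .inr (llt_pR h)

theorem nfP_lle : ∀ a b : LW X, LLe (nfP a b) (p a b)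
  | var _, _ => .inl rfl
  | p _ _, _ => .inl rfl
  | s a1 a2, b => .inr (.sp (by simp only [szX, szX_nfP]; omega))

theorem nf_lle : ∀ u : LW X, LLe (nf u) u := by
  intro u
  induction u with
  | var x => exact .inl rfl
  | s a b iha ihb => exact ((lle_sL iha).trans (lle_sR ihb) : LLe _ _)
  | p a b iha ihb =>
    exact ((nfP_lle (nf a) (nf b)).trans ((lle_pL iha).trans (lle_pR ihb)) : LLe _ _)


theorem nf_nf (u : LW X) : nf (nf u) = nf u := nf_of_normal (normal_nf u)

theorem nf_pL' (a b : LW X) : nf (p (nf a) b) = nf (p a b) := by simp only [nf, nf_nf]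
theorem nf_pR' (a b : LW X) : nf (p a (nf b)) = nf (p a b) := by simp only [nf, nf_nf]
theorem nf_sL' (a b : LW X) : nf (s (nf a) b) = nf (s a b) := by simp only [nf, nf_nf]
theorem nf_sR' (a b : LW X) : nf (s a (nf b)) = nf (s a b) := by simp only [nf, nf_nf]

theorem nf_llt_of_not_normal {u : LW X} (h : ¬ Normal u) : LLt (nf u) u := by
  rcases nf_lle u with he | hl
  · exact absurd (he ▸ normal_nf u) h
  · exact hl

theorem nfP_llt_left {a b : LW X} (t : LW X) (h : LLt a b) : LLt (nfP a t) (nfP b t) := by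
  induction h with
  | size h => exact .size (by simp only [szX_nfP]; omega)
  | var h => exact llt_pL (.var h)
  | sp he =>
    simp only [nfP]
    exact .sp (by simp only [szX, szX_nfP] at he ⊢; omega)
  | s1 he h =>
    simp only [nfP]
    exact .s1 (by simp only [szX, szX_nfP] at he ⊢; omega) h
  | s2 he h ih =>
    simp only [nfP]
    exact .s2 (by simp only [szX, szX_nfP] at he ⊢; omega) ih
  | p1 he h => exact llt_pL (.p1 he h)
  | p2 he h _ => exact llt_pL (.p2 he h)

theorem nfP_llt_right : ∀ (a : LW X) {x y : LW X}, LLt x y → LLt (nfP a x) (nfP a y)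
  | var _, _, _, h => llt_pR h
  | p _ _, _, _, h => llt_pR h
  | s a1 a2, _, _, h => llt_sR (nfP_llt_right a2 h)

end LW

namespace LCtx

variable {X : Type}

/-- composition of ⋆-Ω-words -/
def comp : LCtx X → LCtx X → LCtx X
  | .hole, d => d
  | .pL c w, d => .pL (c.comp d) w
  | .pR w c, d => .pR w (c.comp d)
  | .sL c w, d => .sL (c.comp d) w
  | .sR w c, d => .sR w (c.comp d)

theorem comp_subst : ∀ (c d : LCtx X) (u : LW X), (c.comp d).subst u = c.subst (d.subst u) := by
  intro c d u
  induction c with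
  | hole => rfl
  | pL c w ih => simp only [comp, subst, ih]
  | pR w c ih => simp only [comp, subst, ih]
  | sL c w ih => simp only [comp, subst, ih]
  | sR w c ih => simp only [comp, subst, ih]

end LCtx

namespace LW

variable {X : Type} [LinearOrder X]

theorem llt_subst (c : LCtx X) {x y : LW X} (h : LLt x y) : LLt (c.subst x) (c.subst y) := by
  induction c with
  | hole => exact h
  | pL c w ih => exact llt_pL ih
  | pR w c ih => exact llt_pR ih
  | sL c w ih => exact llt_sL ih
  | sR w c ih => exact llt_sR ih

theorem nf_subst_nf : ∀ (c : LCtx X) (u : LW X), nf (c.subst (nf u)) = nf (c.subst u) := by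
  intro c u
  induction c with
  | hole => exact nf_of_normal (normal_nf u)
  | pL c w ih => simp only [LCtx.subst, nf, ih]
  | pR w c ih => simp only [LCtx.subst, nf, ih]
  | sL c w ih => simp only [LCtx.subst, nf, ih]
  | sR w c ih => simp only [LCtx.subst, nf, ih]

theorem llt_nf_subst (c : LCtx X) {x y : LW X} (hx : Normal x) (hy : Normal y) (h : LLt x y) :
    LLt (nf (c.subst x)) (nf (c.subst y)) := by
  induction c with
  | hole => simp only [LCtx.subst]; rwa [nf_of_normal hx, nf_of_normal hy]
  | pL c w ih => simp only [LCtx.subst, nf]; exact nfP_llt_left _ ih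
  | pR w c ih => simp only [LCtx.subst, nf]; exact nfP_llt_right _ ih
  | sL c w ih => simp only [LCtx.subst, nf]; exact llt_sL ih
  | sR w c ih => simp only [LCtx.subst, nf]; exact llt_sR ih

end LW

end AuxNf

section AuxStep
set_option linter.unusedSectionVars false
set_option linter.unusedVariables false

namespace LW

variable {X : Type} [LinearOrder X]

theorem step_lemma : ∀ (c : LCtx X) (u : LW X), Normal u → ¬ Normal (c.subst u) →
    (∃ c' : LCtx X, (∀ x, nf (c'.subst x) = nf (c.subst x)) ∧ LLt (c'.subst u) (c.subst u)) ∨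
    (∃ (c₁ : LCtx X) (v a b : LW X), Normal v ∧ c = c₁.comp (.pL .hole v) ∧ u = .s a b) := by
  intro c
  induction c with
  | hole => intro u hu hnu; exact absurd hu hnu
  | sL c₀ t ih =>
    intro u hu hnu
    by_cases ht : Normal t
    · have hnc : ¬ Normal (c₀.subst u) := fun h => hnu (Normal.suc h ht)
      rcases ih u hu hnc with ⟨c', he, hl⟩ | ⟨c₁, v, a, b, hv, hc, hua⟩
      · refine .inl ⟨.sL c' t, ?_, ?_⟩
        · intro x; simp only [LCtx.subst, nf, he]
        · exact llt_sL hl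
      · exact .inr ⟨.sL c₁ t, v, a, b, hv, by rw [hc]; rfl, hua⟩
    · refine .inl ⟨.sL c₀ (nf t), ?_, ?_⟩
      · intro x; simp only [LCtx.subst]; rw [nf_sR']
      · exact llt_sR (nf_llt_of_not_normal ht)
  | sR t c₀ ih =>
    intro u hu hnu
    by_cases ht : Normal t
    · have hnc : ¬ Normal (c₀.subst u) := fun h => hnu (Normal.suc ht h)
      rcases ih u hu hnc with ⟨c', he, hl⟩ | ⟨c₁, v, a, b, hv, hc, hua⟩
      · refine .inl ⟨.sR t c', ?_, ?_⟩
        · intro x; simp only [LCtx.subst, nf, he]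
        · exact llt_sR hl
      · exact .inr ⟨.sR t c₁, v, a, b, hv, by rw [hc]; rfl, hua⟩
    · refine .inl ⟨.sR (nf t) c₀, ?_, ?_⟩
      · intro x; simp only [LCtx.subst]; rw [nf_sL']
      · exact llt_sL (nf_llt_of_not_normal ht)
  | pR t c₀ ih =>
    intro u hu hnu
    cases t with
    | s t1 t2 =>
      refine .inl ⟨.sR t1 (.pR t2 c₀), ?_, ?_⟩
      · intro x; simp only [LCtx.subst, nf, nfP]
      · exact .sp (by simp only [szX, LCtx.subst]; omega)
    | var z =>
      by_cases ht : Normal (var z : LW X)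
      · have hnc : ¬ Normal (c₀.subst u) := fun h => hnu (Normal.pre ht h (fun a b => nofun))
        rcases ih u hu hnc with ⟨c', he, hl⟩ | ⟨c₁, v, a, b, hv, hc, hua⟩
        · refine .inl ⟨.pR (var z) c', ?_, ?_⟩
          · intro x; simp only [LCtx.subst, nf, he]
          · exact llt_pR hl
        · exact .inr ⟨.pR (var z) c₁, v, a, b, hv, by rw [hc]; rfl, hua⟩
      · exact absurd Normal.var ht
    | p t1 t2 =>
      by_cases ht : Normal (p t1 t2 : LW X)
      · have hnc : ¬ Normal (c₀.subst u) := fun h => hnu (Normal.pre ht h (fun a b => nofun))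
        rcases ih u hu hnc with ⟨c', he, hl⟩ | ⟨c₁, v, a, b, hv, hc, hua⟩
        · refine .inl ⟨.pR (p t1 t2) c', ?_, ?_⟩
          · intro x; simp only [LCtx.subst, nf, he]
          · exact llt_pR hl
        · exact .inr ⟨.pR (p t1 t2) c₁, v, a, b, hv, by rw [hc]; rfl, hua⟩
      · refine .inl ⟨.pR (nf (p t1 t2)) c₀, ?_, ?_⟩
        · intro x
          simp only [LCtx.subst]; rw [nf_pL']
        · exact llt_pL (nf_llt_of_not_normal ht)
  | pL c₀ t ih =>
    intro u hu hnu
    cases c₀ with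
    | hole =>
      by_cases ht : Normal t
      · cases u with
        | var x => exact absurd (Normal.pre hu ht (fun a b => nofun)) hnu
        | p u1 u2 => exact absurd (Normal.pre hu ht (fun a b => nofun)) hnu
        | s a b => exact .inr ⟨.hole, t, a, b, ht, rfl, rfl⟩
      · refine .inl ⟨.pL .hole (nf t), ?_, ?_⟩
        · intro x; simp only [LCtx.subst]; rw [nf_pR']
        · exact llt_pR (nf_llt_of_not_normal ht)
    | sL c₁ r =>
      refine .inl ⟨.sL c₁ (.p r t), ?_, ?_⟩
      · intro x; simp only [LCtx.subst, nf, nfP]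
      · exact .sp (by simp only [szX, LCtx.subst]; omega)
    | sR r c₁ =>
      refine .inl ⟨.sR r (.pL c₁ t), ?_, ?_⟩
      · intro x; simp only [LCtx.subst, nf, nfP]
      · exact .sp (by simp only [szX, LCtx.subst]; omega)
    | pL c₂ r =>
      by_cases hB : Normal ((LCtx.pL c₂ r).subst u)
      · by_cases ht : Normal t
        · refine absurd (Normal.pre hB ht ?_) hnu
          intro a b h
          simp only [LCtx.subst] at h
          cases h
        · refine .inl ⟨.pL (.pL c₂ r) (nf t), ?_, ?_⟩
          · intro x; simp only [LCtx.subst]; rw [nf_pR']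
          · exact llt_pR (nf_llt_of_not_normal ht)
      · rcases ih u hu hB with ⟨c', he, hl⟩ | ⟨c₁, v, a, b, hv, hc, hua⟩
        · refine .inl ⟨.pL c' t, ?_, ?_⟩
          · intro x; simp only [LCtx.subst, nf, he]
          · exact llt_pL hl
        · exact .inr ⟨.pL c₁ t, v, a, b, hv, by rw [hc]; rfl, hua⟩
    | pR r c₂ =>
      by_cases hB : Normal ((LCtx.pR r c₂).subst u)
      · by_cases ht : Normal t
        · refine absurd (Normal.pre hB ht ?_) hnu
          intro a b h
          simp only [LCtx.subst] at h
          cases h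
        · refine .inl ⟨.pL (.pR r c₂) (nf t), ?_, ?_⟩
          · intro x; simp only [LCtx.subst]; rw [nf_pR']
          · exact llt_pR (nf_llt_of_not_normal ht)
      · rcases ih u hu hB with ⟨c', he, hl⟩ | ⟨c₁, v, a, b, hv, hc, hua⟩
        · refine .inl ⟨.pL c' t, ?_, ?_⟩
          · intro x; simp only [LCtx.subst, nf, he]
          · exact llt_pL hl
        · exact .inr ⟨.pL c₁ t, v, a, b, hv, by rw [hc]; rfl, hua⟩

end LW

end AuxStep

section LFree

variable {X k : Type} [Field k] [LinearOrder X]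

/-- The free L-algebra L(X) realized as the k-space with basis the normal words. -/
abbrev LFree (X k : Type) [Field k] := NW X →₀ k

/-- The s-word u|_s in L(X): substitute into the ⋆-Ω-word c and take normal
forms, extended linearly. -/
noncomputable def lapp (c : LCtx X) (f : LFree X k) : LFree X k :=
  Finsupp.mapDomain (fun w => nfN (c.subst w.1)) f

/-- `NIsLw f w`: w is the leading normal word of f ∈ L(X). -/
def NIsLw (f : LFree X k) (w : NW X) : Prop :=
  w ∈ f.support ∧ ∀ v ∈ f.support, v ≠ w → LW.LLt v.1 w.1

/-- f is monic. -/
def NMonic (f : LFree X k) : Prop := ∃ w, NIsLw f w ∧ f w = 1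

/-- The ideal of L(X) generated by S. -/
noncomputable def NIdS (S : Set (LFree X k)) : Submodule k (LFree X k) :=
  Submodule.span k {g | ∃ (c : LCtx X) (s : LFree X k), s ∈ S ∧ g = lapp c s}

/-- h is a linear combination Σ αᵢ uᵢ|_{sᵢ} of normal sᵢ-words with sᵢ ∈ S and
uᵢ|_{s̄ᵢ} < w. -/
def NTrivLt (S : Set (LFree X k)) (w : NW X) (h : LFree X k) : Prop :=
  ∃ (n : ℕ) (α : Fin n → k) (c : Fin n → LCtx X) (s : Fin n → LFree X k),
    (∀ i, s i ∈ S) ∧ h = ∑ i, α i • lapp (c i) (s i) ∧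
    ∀ i, ∃ ws, NIsLw (s i) ws ∧ LW.Normal ((c i).subst ws.1) ∧
      LW.LLt ((c i).subst ws.1) w.1

/-- h is a linear combination Σ αᵢ uᵢ|_{sᵢ} of normal sᵢ-words with sᵢ ∈ S and
uᵢ|_{s̄ᵢ} ≤ w. -/
def NTrivLe (S : Set (LFree X k)) (w : NW X) (h : LFree X k) : Prop :=
  ∃ (n : ℕ) (α : Fin n → k) (c : Fin n → LCtx X) (s : Fin n → LFree X k),
    (∀ i, s i ∈ S) ∧ h = ∑ i, α i • lapp (c i) (s i) ∧
    ∀ i, ∃ ws, NIsLw (s i) ws ∧ LW.Normal ((c i).subst ws.1) ∧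
      ((c i).subst ws.1 = w.1 ∨ LW.LLt ((c i).subst ws.1) w.1)

/-- All compositions of right multiplication in S are trivial mod S: whenever the
leading word of f ∈ S has the form u₁ ≻ u₂ and v is a normal word, f ≺ v is a
combination of normal s-words with leading words ≤ the leading word of f ≺ v. -/
def RightMultTrivial (S : Set (LFree X k)) : Prop :=
  ∀ f ∈ S, ∀ wf, NIsLw f wf → (∃ u1 u2, wf.1 = .s u1 u2) →
    ∀ v : NW X, ∀ wfv, NIsLw (lapp (.pL .hole v.1) f) wfv →
      NTrivLe S wfv (lapp (.pL .hole v.1) f)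

/-- All compositions of inclusion in S are trivial: whenever w = f̄ = u|_{ḡ} with
u|_g a normal g-word, (f,g)_w = f − u|_g is trivial mod (S, w). -/
def InclusionTrivial (S : Set (LFree X k)) : Prop :=
  ∀ f ∈ S, ∀ g ∈ S, ∀ (c : LCtx X) (wf wg : NW X),
    NIsLw f wf → NIsLw g wg → LW.Normal (c.subst wg.1) → wf.1 = c.subst wg.1 →
      NTrivLt S wf (f - lapp c g)

/-- S is a Gröbner–Shirshov basis in L(X). -/
def NIsGSB (S : Set (LFree X k)) : Prop := RightMultTrivial S ∧ InclusionTrivial S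

end LFree

section AuxFinsupp
set_option linter.unusedSectionVars false
set_option linter.unusedVariables false

open LW

variable {X k : Type} [Field k] [LinearOrder X]

/-- the map on normal words induced by a context -/
noncomputable def phiC (c : LCtx X) (w : NW X) : NW X := nfN (c.subst w.1)

theorem phiC_val (c : LCtx X) (w : NW X) : (phiC c w).1 = nf (c.subst w.1) := rfl

theorem phiC_strictMono (c : LCtx X) {a b : NW X} (h : LLt a.1 b.1) :
    LLt (phiC c a).1 (phiC c b).1 :=
  llt_nf_subst c a.2 b.2 h

theorem phiC_injective (c : LCtx X) : Function.Injective (phiC c) := by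
  intro a b hab
  by_contra hne
  have h1 : a.1 ≠ b.1 := fun h => hne (Subtype.ext h)
  rcases llt_total a.1 b.1 with h | h | h
  · have := phiC_strictMono c h
    rw [hab] at this
    exact llt_irrefl _ this
  · exact h1 h
  · have := phiC_strictMono c h
    rw [hab] at this
    exact llt_irrefl _ this

theorem lapp_eq (c : LCtx X) (f : LFree X k) : lapp c f = Finsupp.mapDomain (phiC c) f := rfl

theorem NIsLw_lapp {s : LFree X k} {ws : NW X} (c : LCtx X) (h : NIsLw s ws) :
    NIsLw (lapp c s) (phiC c ws) := by
  constructor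
  · rw [Finsupp.mem_support_iff, lapp_eq, Finsupp.mapDomain_apply (phiC_injective c)]
    exact Finsupp.mem_support_iff.mp h.1
  · intro v hv hne
    rw [lapp_eq] at hv
    have hv' := Finsupp.mapDomain_support hv
    obtain ⟨x, hx, hfx⟩ := Finset.mem_image.mp hv'
    by_cases hxw : x = ws
    · exact absurd (hfx.symm.trans (by rw [hxw])) hne
    · have := phiC_strictMono c (h.2 x hx hxw)
      rwa [hfx] at this

theorem NIsLw_unique {f : LFree X k} {w w' : NW X} (h : NIsLw f w) (h' : NIsLw f w') :
    w = w' := by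
  by_contra hne
  have h1 := h.2 w' h'.1 (fun e => hne e.symm)
  have h2 := h'.2 w h.1 hne
  exact llt_irrefl _ (llt_trans h1 h2)

theorem lapp_congr {c c' : LCtx X} (h : ∀ x, nf (c.subst x) = nf (c'.subst x))
    (f : LFree X k) : lapp c f = lapp c' f := by
  have he : (fun w : NW X => nfN (c.subst w.1)) = fun w : NW X => nfN (c'.subst w.1) :=
    funext fun w => Subtype.ext (h w.1)
  unfold lapp
  rw [he]

theorem lapp_comp (c d : LCtx X) (f : LFree X k) :
    lapp (c.comp d) f = lapp c (lapp d f) := by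
  rw [lapp_eq, lapp_eq, lapp_eq, ← Finsupp.mapDomain_comp]
  congr 1
  funext w
  refine Subtype.ext ?_
  show nf ((c.comp d).subst w.1) = nf (c.subst (nf (d.subst w.1)))
  rw [LCtx.comp_subst, nf_subst_nf]

theorem lapp_smul (c : LCtx X) (a : k) (f : LFree X k) : lapp c (a • f) = a • lapp c f :=
  Finsupp.mapDomain_smul a f

theorem lapp_sum (c : LCtx X) {n : ℕ} (g : Fin n → LFree X k) :
    lapp c (∑ i, g i) = ∑ i, lapp c (g i) :=
  map_sum (Finsupp.mapDomain.addMonoidHom (phiC c)) g Finset.univ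

theorem NTrivLe_zero (S : Set (LFree X k)) (w : NW X) : NTrivLe S w (0 : LFree X k) :=
  ⟨0, Fin.elim0, Fin.elim0, Fin.elim0, fun i => i.elim0, by simp, fun i => i.elim0⟩

theorem NTrivLe_add {S : Set (LFree X k)} {w : NW X} {h1 h2 : LFree X k}
    (t1 : NTrivLe S w h1) (t2 : NTrivLe S w h2) : NTrivLe S w (h1 + h2) := by
  obtain ⟨n1, α1, c1, s1, hs1, he1, hb1⟩ := t1
  obtain ⟨n2, α2, c2, s2, hs2, he2, hb2⟩ := t2
  refine ⟨n1 + n2, Fin.addCases α1 α2, Fin.addCases c1 c2, Fin.addCases s1 s2, ?_, ?_, ?_⟩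
  · intro i
    refine i.addCases (fun j => ?_) (fun j => ?_)
    · simpa using hs1 j
    · simpa using hs2 j
  · rw [Fin.sum_univ_add]
    simp only [Fin.addCases_left, Fin.addCases_right]
    rw [he1, he2]
  · intro i
    refine i.addCases (fun j => ?_) (fun j => ?_)
    · simpa using hb1 j
    · simpa using hb2 j

theorem NTrivLe_sum {S : Set (LFree X k)} {w : NW X} {n : ℕ} {g : Fin n → LFree X k}
    (h : ∀ i, NTrivLe S w (g i)) : NTrivLe S w (∑ i, g i) := by
  induction n with
  | zero => simpa using NTrivLe_zero S w
  | succ m ih =>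
    rw [Fin.sum_univ_succ]
    exact NTrivLe_add (h 0) (ih (fun i => h i.succ))

theorem NTrivLe_smul {S : Set (LFree X k)} {w : NW X} {h : LFree X k} (a : k)
    (t : NTrivLe S w h) : NTrivLe S w (a • h) := by
  obtain ⟨n, α, c, s, hs, he, hb⟩ := t
  refine ⟨n, fun i => a * α i, c, s, hs, ?_, hb⟩
  rw [he, Finset.smul_sum]
  simp [smul_smul]

theorem NTrivLe_weaken {S : Set (LFree X k)} {w w' : NW X} {h : LFree X k}
    (t : NTrivLe S w' h) (hle : w'.1 = w.1 ∨ LLt w'.1 w.1) : NTrivLe S w h := by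
  rcases hle with he | hl
  · have : w' = w := Subtype.ext he
    exact this ▸ t
  · obtain ⟨n, α, c, s, hs, heq, hb⟩ := t
    refine ⟨n, α, c, s, hs, heq, fun i => ?_⟩
    obtain ⟨ws, h1, h2, h3⟩ := hb i
    refine ⟨ws, h1, h2, .inr ?_⟩
    rcases h3 with he' | hl'
    · exact he' ▸ hl
    · exact llt_trans hl' hl

end AuxFinsupp

/-- if S ⊂ L(X) is a set of monic elements whose compositions of
right multiplication are all trivial modulo S, then every s-word u|_s (s ∈ S) is
a linear combination Σ αᵢ uᵢ|_{sᵢ} of normal sᵢ-words with sᵢ ∈ S and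
uᵢ|_{s̄ᵢ} ≤ the leading word of u|_s. -/
theorem s_word_normal_presentation (X k : Type) [Field k] [LinearOrder X]
    [WellFoundedLT X] (S : Set (LFree X k)) (hS : ∀ s ∈ S, NMonic s)
    (hrm : RightMultTrivial S) :
    ∀ s ∈ S, ∀ (c : LCtx X), ∀ w, NIsLw (lapp c s) w → NTrivLe S w (lapp c s) := by
  have main : ∀ W : LW X, ∀ s ∈ S, ∀ ws : NW X, NIsLw s ws →
      ∀ c : LCtx X, c.subst ws.1 = W → ∀ w, NIsLw (lapp c s) w → NTrivLe S w (lapp c s) := by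
    intro W
    refine LW.llt_wf.induction
      (C := fun W => ∀ s ∈ S, ∀ ws : NW X, NIsLw s ws →
        ∀ c : LCtx X, c.subst ws.1 = W → ∀ w, NIsLw (lapp c s) w → NTrivLe S w (lapp c s))
      W ?_
    clear W
    intro W IH s hs ws hws c hcW w hw
    have hphi : NIsLw (lapp c s) (phiC c ws) := NIsLw_lapp c hws
    have hw' : w = phiC c ws := NIsLw_unique hw hphi
    by_cases hN : LW.Normal (c.subst ws.1)
    · refine ⟨1, fun _ => 1, fun _ => c, fun _ => s, fun _ => hs, ?_, fun _ => ⟨ws, hws, hN, .inl ?_⟩⟩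
      · simp
      · rw [hw', phiC_val, LW.nf_of_normal hN]
    · rcases LW.step_lemma c ws.1 ws.2 hN with ⟨c', he, hl⟩ | ⟨c₁, v, a, b, hv, hc, hus⟩
      · have hle : lapp c s = lapp c' s := (lapp_congr he s).symm
        rw [hle]
        exact IH (c'.subst ws.1) (hcW ▸ hl) s hs ws hws c' rfl w (hle ▸ hw)
      · subst hc
        have hkey : lapp ((c₁.comp (.pL .hole v)) : LCtx X) s
            = lapp c₁ (lapp (.pL .hole v) s) := lapp_comp c₁ (.pL .hole v) s
        have hflw : NIsLw (lapp (.pL .hole v : LCtx X) s) (phiC (.pL .hole v) ws) :=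
          NIsLw_lapp _ hws
        have htriv : NTrivLe S (phiC (.pL .hole v) ws) (lapp (.pL .hole v : LCtx X) s) :=
          hrm s hs ws hws ⟨a, b, hus⟩ ⟨v, hv⟩ _ hflw
        obtain ⟨n, α, cc, ss, hssS, hfe, hterms⟩ := htriv
        have hexp : lapp c₁ (∑ i, α i • lapp (cc i) (ss i))
            = ∑ i, α i • lapp (c₁.comp (cc i)) (ss i) := by
          rw [lapp_sum]
          refine Finset.sum_congr rfl fun i _ => ?_
          rw [lapp_smul, lapp_comp]
        rw [hkey, hfe, hexp]
        -- the leading word of the composition, as a raw word, is strictly below p ws v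
        have hwfveq : (phiC (.pL .hole v : LCtx X) ws).1 = LW.nf (.p ws.1 v) := rfl
        have hwfvnf : LW.nf (LW.p ws.1 v) = LW.s a (LW.nfP b v) := by
          show LW.nfP (LW.nf ws.1) (LW.nf v) = _
          rw [LW.nf_of_normal ws.2, LW.nf_of_normal hv, hus]
          rfl
        have hlt1 : LW.LLt (phiC (.pL .hole v : LCtx X) ws).1 (.p ws.1 v) := by
          rcases LW.nf_lle (LW.p ws.1 v) with he' | hl'
          · rw [hwfvnf] at he'
            cases he'
          · exact hwfveq ▸ hl'
        refine NTrivLe_sum fun i => NTrivLe_smul _ ?_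
        obtain ⟨wsi, hwsi, hnormi, hlei⟩ := hterms i
        have hmi_lt : LW.LLt ((cc i).subst wsi.1) (.p ws.1 v) := by
          rcases hlei with he' | hl'
          · exact he' ▸ hlt1
          · exact LW.llt_trans hl' hlt1
        have hmeas : LW.LLt ((c₁.comp (cc i)).subst wsi.1) W := by
          rw [LCtx.comp_subst]
          have h1 : LW.LLt (c₁.subst ((cc i).subst wsi.1)) (c₁.subst (.p ws.1 v)) :=
            LW.llt_subst c₁ hmi_lt
          have h2 : c₁.subst (LW.p ws.1 v) = W := by
            rw [← hcW, LCtx.comp_subst]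
            rfl
          rwa [h2] at h1
        have hlead : NIsLw (lapp (c₁.comp (cc i)) (ss i)) (phiC (c₁.comp (cc i)) wsi) :=
          NIsLw_lapp _ hwsi
        have hrec := IH _ hmeas (ss i) (hssS i) wsi hwsi (c₁.comp (cc i)) rfl _ hlead
        refine NTrivLe_weaken hrec ?_
        have hw1 : w.1 = LW.nf (c₁.subst (phiC (.pL .hole v : LCtx X) ws).1) := by
          rw [hw', phiC_val, hwfveq, LW.nf_subst_nf, LCtx.comp_subst]
          rfl
        rcases hlei with he' | hl'
        · left
          rw [phiC_val, LCtx.comp_subst, he', hw1]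
        · right
          have := LW.llt_nf_subst c₁ hnormi (phiC (.pL .hole v : LCtx X) ws).2 hl'
          rw [phiC_val, LCtx.comp_subst, hw1]
          exact this
  intro s hs c w hw
  obtain ⟨ws, hws, -⟩ := hS s hs
  exact main _ s hs ws hws c rfl w hw
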